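/- arXiv:1308.4158 — 2 statements merged into one kernel-verified Lean document; each statement's English description precedes it below -/
import Mathlib

section
/- Let P : ℝ^n → ℝ^n be continuously differentiable with P(0) = 0 and all eigenvalues of DP(0) equal to 0. Then for every ε > 0 and every norm ‖·‖ on ℝ^n there exist δ > 0 and C > 0 such that for all x with ‖x‖ < δ and all k ∈ ℕ, ‖P^k(x)‖ ≤ C ε^k ‖x‖. -/
open Finset

private lemma N_sum_le' {E : Type*} [AddCommGroup E] (N : E → ℝ)
    (h0 : N 0 = 0) (hadd : ∀ x y, N (x + y) ≤ N x + N y)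
    {ι : Type*} (s : Finset ι) (f : ι → E) :
    N (∑ i ∈ s, f i) ≤ ∑ i ∈ s, N (f i) := by
  classical
  induction s using Finset.cons_induction with
  | empty => simp [h0]
  | cons a s ha ih =>
      rw [Finset.sum_cons, Finset.sum_cons]
      calc N (f a + ∑ i ∈ s, f i) ≤ N (f a) + N (∑ i ∈ s, f i) := hadd _ _
        _ ≤ _ := by linarith

/-- Superstability (Lemma A.5): if `P : ℝⁿ → ℝⁿ` is `C¹` with `P 0 = 0` and all
eigenvalues of `DP(0)` equal to zero (i.e. `DP(0)` is nilpotent), then for every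
`ε > 0` and every norm `N` on `ℝⁿ` there exist `δ, C > 0` such that
`N (P^[k] x) ≤ C * ε ^ k * N x` whenever `N x < δ` and `k ∈ ℕ`. -/
theorem superstable_superexponential_contraction {n : ℕ}
    (P : (Fin n → ℝ) → (Fin n → ℝ))
    (hP : ContDiff ℝ 1 P) (h0 : P 0 = 0)
    (hnil : IsNilpotent ((fderiv ℝ P 0 : (Fin n → ℝ) →ₗ[ℝ] (Fin n → ℝ)) :
      Module.End ℝ (Fin n → ℝ))) :
    ∀ ε > (0 : ℝ), ∀ N : (Fin n → ℝ) → ℝ,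
      (∀ x, 0 ≤ N x) → (∀ x, N x = 0 ↔ x = 0) →
      (∀ (c : ℝ) (x), N (c • x) = |c| * N x) →
      (∀ x y, N (x + y) ≤ N x + N y) →
      ∃ δ > (0 : ℝ), ∃ C > (0 : ℝ),
        ∀ x, N x < δ → ∀ k : ℕ, N (P^[k] x) ≤ C * ε ^ k * N x := by
  intro ε hε N hN0 hNz hNsmul hNadd
  have hN00 : N 0 = 0 := (hNz 0).mpr rfl
  by_cases hn : n = 0
  · subst hn
    refine ⟨1, one_pos, 1, one_pos, fun x _ k => ?_⟩
    have hx : x = 0 := funext fun i => i.elim0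
    rw [hx, Function.iterate_fixed h0, hN00]
    simp
  -- now n ≥ 1
  haveI : Nonempty (Fin n) := ⟨⟨0, Nat.pos_of_ne_zero hn⟩⟩
  set A : (Fin n → ℝ) →L[ℝ] (Fin n → ℝ) := fderiv ℝ P 0 with hA
  obtain ⟨m, hm⟩ := hnil
  have hAm : ∀ x, (A ^ (m + 1)) x = 0 := by
    intro x
    have h1 : ((A : (Fin n → ℝ) →ₗ[ℝ] (Fin n → ℝ)) ^ m) (A x) = 0 :=
      LinearMap.congr_fun hm (A x)
    have h2 : (A ^ (m + 1)) x = ((A : (Fin n → ℝ) →ₗ[ℝ] (Fin n → ℝ)) ^ m) (A x) :=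
      calc (A ^ (m + 1)) x = A^[m+1] x := congrFun (FunLike.coe_pow_eq_iterate A (m+1)) x
        _ = A^[m] (A x) := Function.iterate_succ_apply _ _ _
        _ = ((A : (Fin n → ℝ) →ₗ[ℝ] (Fin n → ℝ)) ^ m) (A x) :=
            (Module.End.pow_apply _ _ _).symm
    rw [h2, h1]
  set η : ℝ := min ε 1 / 2 with hηdef
  have hη : 0 < η := by
    have := lt_min hε one_pos
    positivity
  set M : (Fin n → ℝ) → ℝ := fun x => ∑ j ∈ range (m + 1), η⁻¹ ^ j * ‖(A ^ j) x‖ with hMdef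
  have hM0 : ∀ x, 0 ≤ M x := fun x =>
    Finset.sum_nonneg fun j _ => by positivity
  have hMx : ∀ x, ‖x‖ ≤ M x := by
    intro x
    have h1 : η⁻¹ ^ 0 * ‖(A ^ 0) x‖ ≤ M x :=
      Finset.single_le_sum (f := fun j => η⁻¹ ^ j * ‖(A ^ j) x‖)
        (fun j _ => by positivity) (Finset.mem_range.mpr (Nat.succ_pos m))
    simpa using h1
  have hMadd : ∀ x y, M (x + y) ≤ M x + M y := by
    intro x y
    rw [hMdef]
    simp only
    rw [← Finset.sum_add_distrib]
    apply Finset.sum_le_sum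
    intro j _
    rw [← mul_add]
    apply mul_le_mul_of_nonneg_left _ (by positivity)
    rw [map_add]
    exact norm_add_le _ _
  set K : ℝ := (∑ j ∈ range (m + 1), η⁻¹ ^ j * ‖A ^ j‖) + 1 with hKdef
  have hK1 : 1 ≤ K := by
    have : 0 ≤ ∑ j ∈ range (m + 1), η⁻¹ ^ j * ‖A ^ j‖ :=
      Finset.sum_nonneg fun j _ => by positivity
    rw [hKdef]; linarith
  have hK : 0 < K := lt_of_lt_of_le one_pos hK1
  have hMK : ∀ x, M x ≤ K * ‖x‖ := by
    intro x
    have h1 : M x ≤ (∑ j ∈ range (m + 1), η⁻¹ ^ j * ‖A ^ j‖) * ‖x‖ := by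
      rw [Finset.sum_mul]
      apply Finset.sum_le_sum
      intro j _
      rw [mul_assoc]
      exact mul_le_mul_of_nonneg_left ((A ^ j).le_opNorm x) (by positivity)
    have h2 : (∑ j ∈ range (m + 1), η⁻¹ ^ j * ‖A ^ j‖) * ‖x‖ ≤ K * ‖x‖ :=
      mul_le_mul_of_nonneg_right (by rw [hKdef]; linarith) (norm_nonneg x)
    exact h1.trans h2
  have hMA : ∀ x, M (A x) ≤ η * M x := by
    intro x
    have key : M (A x) = η * ∑ j ∈ range (m + 1), η⁻¹ ^ (j + 1) * ‖(A ^ (j + 1)) x‖ := by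
      rw [hMdef, Finset.mul_sum]
      apply Finset.sum_congr rfl
      intro j _
      have h1 : (A ^ j) (A x) = (A ^ (j + 1)) x := by
        rw [pow_succ, ContinuousLinearMap.mul_apply]
      rw [h1, pow_succ]
      field_simp
      rw [one_div, pow_succ, show η * ‖(A ^ j * A) x‖ * (η⁻¹ ^ j * η⁻¹) = (η * η⁻¹) * (η⁻¹ ^ j * ‖(A ^ j * A) x‖) by ring, mul_inv_cancel₀ hη.ne', one_mul]
    have h2 : ∑ j ∈ range (m + 1), η⁻¹ ^ (j + 1) * ‖(A ^ (j + 1)) x‖ ≤ M x := by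
      have h3 := Finset.sum_range_succ' (fun j => η⁻¹ ^ j * ‖(A ^ j) x‖) (m + 1)
      have h4 := Finset.sum_range_succ (fun j => η⁻¹ ^ j * ‖(A ^ j) x‖) (m + 1)
      have h5 : η⁻¹ ^ (m + 1) * ‖(A ^ (m + 1)) x‖ = 0 := by
        rw [hAm x, norm_zero, mul_zero]
      have h6 : (0:ℝ) ≤ η⁻¹ ^ 0 * ‖(A ^ 0) x‖ := by positivity
      rw [hMdef]
      simp only at h3 h4 ⊢
      rw [h5] at h4
      linarith [h3, h4]
    calc M (A x) = η * ∑ j ∈ range (m + 1), η⁻¹ ^ (j + 1) * ‖(A ^ (j + 1)) x‖ := key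
      _ ≤ η * M x := mul_le_mul_of_nonneg_left h2 (le_of_lt hη)
  -- little-o estimate from differentiability
  have hdiff : HasFDerivAt P A 0 := (hP.differentiable one_ne_zero 0).hasFDerivAt
  have hlo : (fun h => P h - A h) =o[nhds (0:(Fin n → ℝ))] fun h => h := by
    have := hdiff.isLittleO
    simpa [h0] using this
  set ρ : ℝ := η / K with hρdef
  have hρ : 0 < ρ := div_pos hη hK
  have hev : ∀ᶠ y in nhds (0:(Fin n → ℝ)), ‖P y - A y‖ ≤ ρ * ‖y‖ := hlo.def hρ
  rw [Metric.eventually_nhds_iff] at hev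
  obtain ⟨δ₀, hδ₀, hball⟩ := hev
  set ε' : ℝ := min ε 1 with hε'def
  have hε' : 0 < ε' := lt_min hε one_pos
  have hε'1 : ε' ≤ 1 := min_le_right _ _
  have hε'ε : ε' ≤ ε := min_le_left _ _
  have hηη : η + η = ε' := by rw [hηdef, hε'def]; ring
  have hstep : ∀ x : (Fin n → ℝ), ‖x‖ < δ₀ → M (P x) ≤ ε' * M x := by
    intro x hx
    have h1 : M (P x) ≤ M (A x) + M (P x - A x) := by
      have := hMadd (A x) (P x - A x)
      simpa using this
    have h3 : ‖P x - A x‖ ≤ ρ * ‖x‖ := hball (by simpa [dist_zero_right] using hx)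
    have h2 : M (P x - A x) ≤ K * (ρ * ‖x‖) := by
      calc M (P x - A x) ≤ K * ‖P x - A x‖ := hMK _
        _ ≤ K * (ρ * ‖x‖) := mul_le_mul_of_nonneg_left h3 (le_of_lt hK)
    have h4 : K * (ρ * ‖x‖) = η * ‖x‖ := by
      rw [hρdef]; field_simp
    have h5 : η * ‖x‖ ≤ η * M x := mul_le_mul_of_nonneg_left (hMx x) (le_of_lt hη)
    have h6 := hMA x
    rw [← hηη]
    nlinarith
  have hiter : ∀ x : (Fin n → ℝ), M x < δ₀ → ∀ k, M (P^[k] x) ≤ ε' ^ k * M x := by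
    intro x hx k
    induction k with
    | zero => simp
    | succ k ih =>
      have hk1 : ε' ^ k ≤ 1 := pow_le_one₀ (le_of_lt hε') hε'1
      have hMk : M (P^[k] x) < δ₀ := by
        have : ε' ^ k * M x ≤ M x := by nlinarith [hM0 x]
        linarith
      rw [Function.iterate_succ_apply']
      have hs := hstep (P^[k] x) (lt_of_le_of_lt (hMx _) hMk)
      calc M (P (P^[k] x)) ≤ ε' * M (P^[k] x) := hs
        _ ≤ ε' * (ε' ^ k * M x) := mul_le_mul_of_nonneg_left ih (le_of_lt hε')
        _ = ε' ^ (k + 1) * M x := by ring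
  -- compare N with the standard norm
  classical
  set e : Fin n → (Fin n → ℝ) := fun i => fun j => if i = j then (1:ℝ) else 0 with hedef
  set c1 : ℝ := ∑ i, N (e i) with hc1def
  have hNe : ∀ i, 0 ≤ N (e i) := fun i => hN0 _
  have hc1pos : 0 < c1 := by
    apply Finset.sum_pos'
    · exact fun i _ => hNe i
    · refine ⟨Classical.arbitrary (Fin n), Finset.mem_univ _, ?_⟩
      rcases lt_or_eq_of_le (hNe (Classical.arbitrary (Fin n))) with h | h
      · exact h
      · exfalso
        have : e (Classical.arbitrary (Fin n)) = 0 := (hNz _).mp h.symm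
        have := congrFun this (Classical.arbitrary (Fin n))
        simp [hedef] at this
  have hNle : ∀ x : (Fin n → ℝ), N x ≤ c1 * ‖x‖ := by
    intro x
    have hx : x = ∑ i, x i • e i := by
      rw [hedef]; exact pi_eq_sum_univ x
    calc N x = N (∑ i, x i • e i) := by rw [← hx]
      _ ≤ ∑ i, N (x i • e i) := N_sum_le' N hN00 hNadd _ _
      _ = ∑ i, |x i| * N (e i) := by
          apply Finset.sum_congr rfl; intro i _; exact hNsmul _ _
      _ ≤ ∑ i, ‖x‖ * N (e i) := by
          apply Finset.sum_le_sum; intro i _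
          exact mul_le_mul_of_nonneg_right
            (by simpa [Real.norm_eq_abs] using norm_le_pi_norm x i) (hNe i)
      _ = c1 * ‖x‖ := by
          rw [hc1def, Finset.sum_mul]
          exact Finset.sum_congr rfl fun i _ => mul_comm _ _
  have hNneg : ∀ z : (Fin n → ℝ), N (-z) = N z := by
    intro z
    have := hNsmul (-1) z
    simpa using this
  have hNsub : ∀ x y : (Fin n → ℝ), N x - N y ≤ N (x - y) := by
    intro x y
    have := hNadd (x - y) y
    simp only [sub_add_cancel] at this
    linarith
  have hNcont : Continuous N := by
    have hlip : LipschitzWith (Real.toNNReal c1) N := by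
      apply LipschitzWith.of_dist_le_mul
      intro x y
      rw [Real.dist_eq, dist_eq_norm]
      have hc : c1 ≤ (Real.toNNReal c1 : ℝ) := Real.le_coe_toNNReal c1
      have h1 : N x - N y ≤ N (x - y) := hNsub x y
      have h2 : N y - N x ≤ N (x - y) := by
        have := hNsub y x
        rw [show y - x = -(x - y) by ring, hNneg] at this
        exact this
      have h3 : N (x - y) ≤ c1 * ‖x - y‖ := hNle _
      have h4 : c1 * ‖x - y‖ ≤ (Real.toNNReal c1 : ℝ) * ‖x - y‖ :=
        mul_le_mul_of_nonneg_right hc (norm_nonneg _)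
      rw [abs_sub_le_iff]
      constructor <;> linarith
    exact hlip.continuous
  haveI : Nontrivial (Fin n → ℝ) := by
    refine ⟨0, e (Classical.arbitrary (Fin n)), ?_⟩
    intro h
    have := congrFun h (Classical.arbitrary (Fin n))
    simp [hedef] at this
  obtain ⟨u, hu, humin⟩ := (isCompact_sphere (0:(Fin n → ℝ)) 1).exists_isMinOn
    (NormedSpace.sphere_nonempty.mpr zero_le_one) hNcont.continuousOn
  have hu1 : ‖u‖ = 1 := mem_sphere_zero_iff_norm.mp hu
  set m₀ : ℝ := N u with hm₀def
  have hm₀ : 0 < m₀ := by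
    rcases lt_or_eq_of_le (hN0 u) with h | h
    · exact h
    · exfalso
      have : u = 0 := (hNz u).mp h.symm
      rw [this, norm_zero] at hu1
      norm_num at hu1
  have hNge : ∀ x : (Fin n → ℝ), m₀ * ‖x‖ ≤ N x := by
    intro x
    rcases eq_or_ne x 0 with rfl | hx
    · simp [hN00]
    · have hxn : 0 < ‖x‖ := norm_pos_iff.mpr hx
      have hmem : ‖x‖⁻¹ • x ∈ Metric.sphere (0:Fin n → ℝ) 1 := by
        rw [mem_sphere_zero_iff_norm]
        exact norm_smul_inv_norm hx
      have h1 : m₀ ≤ N (‖x‖⁻¹ • x) := humin hmem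
      have h2 : N (‖x‖⁻¹ • x) = ‖x‖⁻¹ * N x := by
        rw [hNsmul, abs_of_pos (inv_pos.mpr hxn)]
      rw [h2] at h1
      calc m₀ * ‖x‖ ≤ ‖x‖⁻¹ * N x * ‖x‖ := mul_le_mul_of_nonneg_right h1 (le_of_lt hxn)
        _ = N x := by field_simp
  -- Conclude
  refine ⟨δ₀ * m₀ / K, by positivity, c1 * K / m₀, by positivity, ?_⟩
  intro x hx k
  have hxM : M x < δ₀ := by
    have h1 : m₀ * ‖x‖ ≤ N x := hNge x
    have h2 : ‖x‖ < δ₀ / K := by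
      rw [lt_div_iff₀ hK]
      have : m₀ * ‖x‖ < δ₀ * m₀ / K := lt_of_le_of_lt h1 hx
      calc ‖x‖ * K = (m₀ * ‖x‖) * (K / m₀) := by field_simp
        _ < (δ₀ * m₀ / K) * (K / m₀) := by
            apply mul_lt_mul_of_pos_right this
            positivity
        _ = δ₀ := by field_simp
    calc M x ≤ K * ‖x‖ := hMK x
      _ < K * (δ₀ / K) := mul_lt_mul_of_pos_left h2 hK
      _ = δ₀ := by field_simp
  have h1 : N (P^[k] x) ≤ c1 * M (P^[k] x) := by
    calc N (P^[k] x) ≤ c1 * ‖P^[k] x‖ := hNle _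
      _ ≤ c1 * M (P^[k] x) := mul_le_mul_of_nonneg_left (hMx _) (le_of_lt hc1pos)
  have h2 : M (P^[k] x) ≤ ε' ^ k * M x := hiter x hxM k
  have h3 : M x ≤ K / m₀ * N x := by
    have := hNge x
    calc M x ≤ K * ‖x‖ := hMK x
      _ ≤ K * (m₀⁻¹ * N x) := by
          apply mul_le_mul_of_nonneg_left _ (le_of_lt hK)
          calc ‖x‖ = m₀⁻¹ * (m₀ * ‖x‖) := by field_simp
            _ ≤ m₀⁻¹ * N x := mul_le_mul_of_nonneg_left (hNge x) (by positivity)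
      _ = K / m₀ * N x := by ring
  have hεk : ε' ^ k ≤ ε ^ k := pow_le_pow_left₀ (le_of_lt hε') hε'ε k
  calc N (P^[k] x) ≤ c1 * M (P^[k] x) := h1
    _ ≤ c1 * (ε' ^ k * M x) := mul_le_mul_of_nonneg_left h2 (le_of_lt hc1pos)
    _ ≤ c1 * (ε' ^ k * (K / m₀ * N x)) := by
        apply mul_le_mul_of_nonneg_left _ (le_of_lt hc1pos)
        exact mul_le_mul_of_nonneg_left h3 (by positivity)
    _ ≤ c1 * (ε ^ k * (K / m₀ * N x)) := by
        apply mul_le_mul_of_nonneg_left _ (le_of_lt hc1pos)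
        exact mul_le_mul_of_nonneg_right hεk (mul_nonneg (by positivity) (hN0 x))
    _ = c1 * K / m₀ * ε ^ k * N x := by ring
end

section
/- Let M be a smooth manifold, F a smooth vector field on M with maximal flow φ, G ⊆ M a smooth embedded codimension-1 submanifold given locally as the zero set of a smooth submersion h : M → ℝ. If φ(t,x) ∈ G and F(φ(t,x)) is not tangent to G (equivalently Dh(F(φ(t,x))) ≠ 0), then there is a neighborhood U of x and a smooth map σ : U → ℝ with σ(x) = t and φ(σ(y), y) ∈ G for all y ∈ U. -/
open Manifold Set

/-- Time-to-impact map (Lemma A.1). Let `M` be a smooth `n`-manifold, `F` a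
vector field on `M` with (maximal) flow `φ : ℝ × M → M` (smooth where defined;
for simplicity we assume the flow is globally defined and smooth), and let the
codimension-1 submanifold `G` be given locally as the zero set of a smooth
submersion `h : M → ℝ`.  The flow property enters through the hypothesis that
the time derivative of `s ↦ h (φ (s, y))` equals `Dh` applied to `F` along the
flow.  If `φ (t, x) ∈ G` (i.e. `h (φ (t, x)) = 0`) and `F (φ (t, x))` is not
tangent to `G` (i.e. `Dh (F (φ (t, x))) ≠ 0`), then there is an open
neighborhood `U` of `x` and a smooth map `σ : U → ℝ` with `σ x = t` and
`φ (σ y, y) ∈ G` for all `y ∈ U`. -/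
theorem time_to_impact {n : ℕ} {M : Type*} [TopologicalSpace M]
    [ChartedSpace (EuclideanSpace ℝ (Fin n)) M] [IsManifold (𝓡 n) (⊤ : ℕ∞) M]
    (φ : ℝ × M → M)
    (hφ : ContMDiff (𝓘(ℝ, ℝ).prod (𝓡 n)) (𝓡 n) (⊤ : ℕ∞) φ)
    (h : M → ℝ) (hh : ContMDiff (𝓡 n) 𝓘(ℝ, ℝ) (⊤ : ℕ∞) h)
    (F : (y : M) → TangentSpace (𝓡 n) y)
    (hflow : ∀ (y : M) (s : ℝ),
      deriv (fun u : ℝ => h (φ (u, y))) s =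
        mfderiv (𝓡 n) 𝓘(ℝ, ℝ) h (φ (s, y)) (F (φ (s, y))))
    (x : M) (t : ℝ)
    (hxG : h (φ (t, x)) = 0)
    (htrans : mfderiv (𝓡 n) 𝓘(ℝ, ℝ) h (φ (t, x)) (F (φ (t, x))) ≠ 0) :
    ∃ U : Set M, IsOpen U ∧ x ∈ U ∧
      ∃ σ : M → ℝ, ContMDiffOn (𝓡 n) 𝓘(ℝ, ℝ) (⊤ : ℕ∞) σ U ∧ σ x = t ∧
        ∀ y ∈ U, h (φ (σ y, y)) = 0 := by
  classical
  set E := EuclideanSpace ℝ (Fin n) with hE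
  set c := chartAt E x with hc
  -- the function whose zero set we follow
  set g : ℝ × M → ℝ := fun p => h (φ p) with hgdef
  have hg : ContMDiff (𝓘(ℝ, ℝ).prod (𝓡 n)) 𝓘(ℝ, ℝ) (⊤ : ℕ∞) g := hh.comp hφ
  -- its chart representation
  set G : ℝ × E → ℝ := fun p => g (p.1, c.symm p.2) with hGdef
  set Ω : Set (ℝ × E) := univ ×ˢ c.target with hΩdef
  have hΩ : IsOpen Ω := isOpen_univ.prod c.open_target
  -- `G` is smooth on `Ω`
  have hGsm : ContDiffOn ℝ (⊤ : ℕ∞) G Ω := by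
    have h1 : ContMDiffOn (𝓘(ℝ, ℝ).prod (𝓡 n)) (𝓘(ℝ, ℝ).prod (𝓡 n)) (⊤ : ℕ∞)
        (fun p : ℝ × E => ((p.1 : ℝ), c.symm p.2)) Ω := by
      apply ContMDiffOn.prodMk
      · exact (contMDiff_fst).contMDiffOn
      · exact (contMDiffOn_chart_symm (I := 𝓡 n)).comp
          (contMDiff_snd).contMDiffOn (fun p hp => hp.2)
    have h2 : ContMDiffOn (𝓘(ℝ, ℝ).prod (𝓡 n)) 𝓘(ℝ, ℝ) (⊤ : ℕ∞) G Ω :=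
      hg.comp_contMDiffOn h1
    have h3 : ContMDiffOn 𝓘(ℝ, ℝ × E) 𝓘(ℝ, ℝ) (⊤ : ℕ∞) G Ω := by
      rw [modelWithCornersSelf_prod, ← chartedSpaceSelf_prod]
      exact h2
    exact h3.contDiffOn
  have hone : (1 : WithTop ℕ∞) ≤ ((⊤ : ℕ∞) : WithTop ℕ∞) := by
    exact_mod_cast le_top
  -- derivative bookkeeping
  set a : ℝ × E → ℝ := fun p => fderiv ℝ G p (1, 0) with hadef
  have hGdiff : ∀ p ∈ Ω, HasFDerivAt G (fderiv ℝ G p) p := fun p hp =>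
    ((hGsm.contDiffAt (hΩ.mem_nhds hp)).differentiableAt (ne_of_gt (lt_of_lt_of_le zero_lt_one hone))).hasFDerivAt
  have hkey : ∀ (s : ℝ) (z : E), z ∈ c.target →
      HasDerivAt (fun u : ℝ => G (u, z)) (a (s, z)) s := by
    intro s z hz
    have hin : HasDerivAt (fun u : ℝ => ((u : ℝ), z)) ((1 : ℝ), (0 : E)) s :=
      (hasDerivAt_id s).prodMk (hasDerivAt_const s z)
    exact (hGdiff (s, z) ⟨mem_univ _, hz⟩).comp_hasDerivAt s hin
  have hz₀ : c x ∈ c.target := c.map_source (mem_chart_source E x)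
  have hGx : ∀ u : ℝ, G (u, c x) = h (φ (u, x)) := by
    intro u
    simp only [hGdef, hgdef, c.left_inv (mem_chart_source E x)]
  have ha0 : a (t, c x) ≠ 0 := by
    have h1 := (hkey t (c x) hz₀).deriv
    have h2 : (fun u : ℝ => G (u, c x)) = fun u : ℝ => h (φ (u, x)) := funext hGx
    rw [h2, hflow x t] at h1
    rw [← h1]
    exact htrans
  have hacont : ContinuousOn a Ω := by
    exact ((hGsm.continuousOn_fderiv_of_isOpen hΩ hone).clm_apply continuousOn_const)
  set Ω' : Set (ℝ × E) := {p ∈ Ω | a p ≠ 0} with hΩ'def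
  have hΩ' : IsOpen Ω' := by
    have : Ω' = Ω ∩ a ⁻¹' ({0}ᶜ) := by
      ext p; simp [hΩ'def, and_comm]
    rw [this]
    exact hacont.isOpen_inter_preimage hΩ isOpen_compl_singleton
  have hp₀Ω' : ((t, c x) : ℝ × E) ∈ Ω' := ⟨⟨mem_univ _, hz₀⟩, ha0⟩
  -- splitting of a linear map on the product
  have Lsplit : ∀ (L : (ℝ × E) →L[ℝ] ℝ) (q : ℝ × E),
      L q = q.1 * L (1, 0) + L (0, q.2) := by
    intro L q
    have hq : q = q.1 • (((1 : ℝ), (0 : E)) : ℝ × E) + ((0 : ℝ), q.2) := by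
      ext <;> simp
    conv_lhs => rw [hq]
    rw [map_add, map_smul, smul_eq_mul]
  -- the map to invert, and its invertible derivative on Ω'
  set Φ : ℝ × E → ℝ × E := fun q => (G q, q.2) with hΦdef
  have hΦderiv : ∀ p ∈ Ω,
      HasFDerivAt Φ ((fderiv ℝ G p).prod (ContinuousLinearMap.snd ℝ ℝ E)) p :=
    fun p hp => (hGdiff p hp).prodMk (hasFDerivAt_snd)
  have hΦcd : ∀ p ∈ Ω, ContDiffAt ℝ (⊤ : ℕ∞) Φ p := fun p hp =>
    (hGsm.contDiffAt (hΩ.mem_nhds hp)).prodMk contDiffAt_snd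
  have hinv : ∀ p ∈ Ω', ∃ e : (ℝ × E) ≃L[ℝ] (ℝ × E),
      (e : (ℝ × E) →L[ℝ] ℝ × E) =
        (fderiv ℝ G p).prod (ContinuousLinearMap.snd ℝ ℝ E) := by
    intro p hp
    have hap : fderiv ℝ G p (1, 0) ≠ 0 := hp.2
    set L : (ℝ × E) →L[ℝ] ℝ := fderiv ℝ G p with hLdef
    set f₁ : (ℝ × E) →L[ℝ] (ℝ × E) := L.prod (ContinuousLinearMap.snd ℝ ℝ E) with hf₁def
    set B : (ℝ × E) →L[ℝ] ℝ :=
      L.comp (((0 : (ℝ × E) →L[ℝ] ℝ)).prod (ContinuousLinearMap.snd ℝ ℝ E)) with hBdef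
    set f₂ : (ℝ × E) →L[ℝ] (ℝ × E) :=
      ((L (1, 0))⁻¹ • (ContinuousLinearMap.fst ℝ ℝ E - B)).prod
        (ContinuousLinearMap.snd ℝ ℝ E) with hf₂def
    have hB : ∀ q : ℝ × E, B q = L (0, q.2) := by
      intro q
      simp [hBdef]
    have hleft : Function.LeftInverse f₂ f₁ := by
      intro q
      have hsplit := Lsplit L q
      have h1 : f₁ q = (L q, q.2) := rfl
      have h2 : f₂ (L q, q.2) = ((L (1, 0))⁻¹ * (L q - L (0, q.2)), q.2) := by
        simp [hf₂def, hB (L q, q.2)]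
      rw [h1, h2]
      have : L q - L (0, q.2) = q.1 * L (1, 0) := by rw [hsplit]; ring
      rw [this]
      ext
      · simp only []
        field_simp
      · rfl
    have hright : Function.RightInverse f₂ f₁ := by
      intro q
      have h2 : f₂ q = ((L (1, 0))⁻¹ * (q.1 - L (0, q.2)), q.2) := by
        simp [hf₂def, hB q]
      rw [h2]
      have h3 : f₁ ((L (1, 0))⁻¹ * (q.1 - L (0, q.2)), q.2) =
          (L ((L (1, 0))⁻¹ * (q.1 - L (0, q.2)), q.2), q.2) := rfl
      rw [h3]
      have h4 := Lsplit L (((L (1, 0))⁻¹ * (q.1 - L (0, q.2)), q.2) : ℝ × E)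
      ext
      · simp only [h4]
        field_simp
        ring
      · rfl
    exact ⟨ContinuousLinearEquiv.equivOfInverse f₁ f₂ hleft hright, rfl⟩
  -- invert Φ near p₀ := (t, c x)
  set p₀ : ℝ × E := (t, c x) with hp₀def
  obtain ⟨e₀, he₀⟩ := hinv p₀ hp₀Ω'
  have hΦcd₀ := hΦcd p₀ hp₀Ω'.1
  have hΦd₀ : HasFDerivAt Φ (e₀ : (ℝ × E) →L[ℝ] ℝ × E) p₀ := by
    rw [he₀]; exact hΦderiv p₀ hp₀Ω'.1
  set Φh := hΦcd₀.toOpenPartialHomeomorph Φ hΦd₀ (ne_of_gt (lt_of_lt_of_le zero_lt_one hone)) with hPhihat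
  have hsrc : p₀ ∈ Φh.source := hΦcd₀.mem_toOpenPartialHomeomorph_source hΦd₀ (ne_of_gt (lt_of_lt_of_le zero_lt_one hone))
  have hcoe : (Φh : ℝ × E → ℝ × E) = Φ := hΦcd₀.toOpenPartialHomeomorph_coe hΦd₀ (ne_of_gt (lt_of_lt_of_le zero_lt_one hone))
  set V : Set (ℝ × E) := Φh.source ∩ Ω' with hVdef
  have hV : IsOpen V := Φh.open_source.inter hΩ'
  have hp₀V : p₀ ∈ V := ⟨hsrc, hp₀Ω'⟩
  set W : Set (ℝ × E) := Φh '' V with hWdef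
  have hWopen : IsOpen W := Φh.isOpen_image_of_subset_source hV inter_subset_left
  have hWsymm : ∀ q ∈ W, Φh.symm q ∈ V ∧ Φ (Φh.symm q) = q := by
    intro q hq
    obtain ⟨p, hpV, rfl⟩ := hq
    have hps : p ∈ Φh.source := hpV.1
    rw [Φh.left_inv hps]
    exact ⟨hpV, (congrFun hcoe p)⟩
  have hsymm_cd : ∀ q ∈ W, ContDiffAt ℝ (⊤ : ℕ∞) Φh.symm q := by
    intro q hq
    obtain ⟨⟨hpsrc, hpΩ'⟩, hΦq⟩ := hWsymm q hq
    obtain ⟨e, he⟩ := hinv _ hpΩ'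
    have hqt : q ∈ Φh.target := by
      obtain ⟨p, hpV, rfl⟩ := hq
      exact Φh.map_source hpV.1
    apply Φh.contDiffAt_symm hqt (f₀' := e)
    · rw [hcoe, he]
      exact hΦderiv _ hpΩ'.1
    · rw [hcoe]
      exact hΦcd _ hpΩ'.1
  have hΦp₀ : Φ p₀ = ((0 : ℝ), c x) := by
    have : G p₀ = 0 := by rw [hp₀def, hGx t, hxG]
    simp only [hΦdef, this, hp₀def, hGx t, hxG]
  have hq₀W : ((0 : ℝ), c x) ∈ W := ⟨p₀, hp₀V, by rw [hcoe, hΦp₀]⟩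
  set σ' : E → ℝ := fun z => (Φh.symm (0, z)).1 with hσ'def
  set U' : Set E := (fun z : E => ((0 : ℝ), z)) ⁻¹' W with hU'def
  have hU' : IsOpen U' := hWopen.preimage (continuous_const.prodMk continuous_id)
  have hz₀U' : c x ∈ U' := hq₀W
  set U : Set M := c.source ∩ c ⁻¹' U' with hUdef
  have hUopen : IsOpen U := c.isOpen_inter_preimage hU'
  have hxU : x ∈ U := ⟨mem_chart_source E x, hz₀U'⟩
  refine ⟨U, hUopen, hxU, fun y => σ' (c y), ?_, ?_, ?_⟩
  · intro y hy
    have hcy : c y ∈ U' := hy.2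
    have h1 : ContMDiffAt (𝓡 n) (𝓡 n) (⊤ : ℕ∞) c y :=
      contMDiffOn_chart.contMDiffAt (c.open_source.mem_nhds hy.1)
    have h2 : ContDiffAt ℝ (⊤ : ℕ∞) σ' (c y) := by
      have hs := hsymm_cd _ hcy
      have hin : ContDiffAt ℝ (⊤ : ℕ∞) (fun z : E => ((0 : ℝ), z)) (c y) :=
        (contDiff_const.prodMk contDiff_id).contDiffAt
      exact (hs.comp _ hin).fst
    have h3 : ContMDiffAt (𝓡 n) 𝓘(ℝ, ℝ) (⊤ : ℕ∞) σ' (c y) := h2.contMDiffAt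
    exact ((h3.comp y h1)).contMDiffWithinAt
  · show (Φh.symm ((0 : ℝ), c x)).1 = t
    have hlv : Φh.symm ((0 : ℝ), c x) = p₀ := by
      rw [← hΦp₀, ← hcoe]
      exact Φh.left_inv hsrc
    rw [hlv]
  · intro y hy
    have hcy : c y ∈ U' := hy.2
    obtain ⟨⟨hpsrc, hpΩ'⟩, hΦq⟩ := hWsymm _ hcy
    have hsnd : (Φh.symm ((0 : ℝ), c y)).2 = c y := congrArg Prod.snd hΦq
    have hfst : G (Φh.symm ((0 : ℝ), c y)) = 0 := congrArg Prod.fst hΦq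
    have hGz : G ((Φh.symm ((0 : ℝ), c y)).1, c y) = 0 := by
      rw [← Prod.mk.eta (p := Φh.symm ((0 : ℝ), c y)), hsnd] at hfst
      exact hfst
    have hyy : c.symm (c y) = y := c.left_inv hy.1
    calc h (φ (σ' (c y), y)) = G (σ' (c y), c y) := by
          simp [hGdef, hgdef, hyy]
      _ = 0 := hGz
end
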